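/- Let q ≥ 2, j ≥ 2, 1 < s < q, s̄ = q - s. With b_{j,m,n} as above and c_{j,m,n} := b_{j,m,n} - [s̄^{j+m-n}]_q for 1 ≤ n ≤ q^{j-1}+1 and m ≥ n, one has 0 < c_{j,m,n} ≤ q^{j+m-n} - 1 and c_{j,m+1,n} = c_{j,m,n} + s · q^{j+m-n}. -/

import Mathlib

/-- `[1^m 0^j]_q = ∑_{i<m} q^{j+i}`. -/
def onesZeros (q j m : ℕ) : ℕ := ∑ i ∈ Finset.range m, q ^ (j + i)

/-- `bSeq q j m t` is `b_{j,m,t+1}`, defined by `b_{j,m,1} = [1^m 0^j]_q`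
and `b_{j,m,n+1} = b_{j,m,n} - (q^{j+m-n} - 1)`. -/
def bSeq (q j m : ℕ) : ℕ → ℕ
  | 0 => onesZeros q j m
  | t + 1 => bSeq q j m t - (q ^ (j + m - t - 1) - 1)

/-- `c_{j,m,n} = b_{j,m,n} - [s̄^{j+m-n}]_q` with `s̄ = q - s`. -/
def cSeq (q j s m n : ℕ) : ℕ :=
  bSeq q j m (n - 1) - (q - s) * (q ^ (j + m - n) - 1) / (q - 1)

/-!
Each step of the recursion for `b` removes the leading digit `q^{j+m-n}` of `[1^m 0^j]_q` and
adds `1`, so `b_{j,m,n} = [1^{m-n+1} 0^j]_q + n - 1`. Writing `[k] = ∑_{i<k} q^i`, so that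
`[1^r 0^j]_q = [j+r] - [j]` and `[s̄^k]_q = (q - s)[k]`, this gives the closed form
`c_{j,m,n} = s[j+m-n] + n - [j]`. All three claims follow: positivity from `[j] ≤ [j+m-n]`,
the upper bound `q^{j+m-n} - 1 = (q-1)[j+m-n]` from `s ≤ q - 1` and `n ≤ q^{j-1} + 1 ≤ [j]`,
and the recursion in `m` from `[k+1] = [k] + q^k`.
-/

open Finset

lemma sub_one_mul_geomSum_add_one {q : ℕ} (hq : 1 ≤ q) (k : ℕ) :
    (q - 1) * ∑ i ∈ range k, q ^ i + 1 = q ^ k := by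
  simpa [Nat.sub_add_cancel hq, mul_comm] using geom_sum_mul_add (q - 1) k

lemma pow_pred_add_one_le_geomSum {q j : ℕ} (hj : 2 ≤ j) :
    q ^ (j - 1) + 1 ≤ ∑ i ∈ range j, q ^ i := by
  obtain ⟨i, rfl⟩ : ∃ i, j = i + 2 := ⟨j - 2, by omega⟩
  rw [show i + 2 - 1 = i + 1 by omega, sum_range_succ, add_comm]
  gcongr
  simpa using single_le_sum (f := fun i => q ^ i) (fun _ _ => Nat.zero_le _)
    (mem_range.2 (Nat.succ_pos i))

lemma geomSum_add_onesZeros (q j r : ℕ) :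
    ∑ i ∈ range j, q ^ i + onesZeros q j r = ∑ i ∈ range (j + r), q ^ i :=
  (sum_range_add _ j r).symm

lemma bSeq_eq_onesZeros_add {q j m t : ℕ} (hq : 1 ≤ q) (ht : t ≤ m) :
    bSeq q j m t = onesZeros q j (m - t) + t := by
  induction t with
  | zero => rfl
  | succ t ih =>
    have hpos : 1 ≤ q ^ (j + (m - (t + 1))) := Nat.one_le_pow _ _ hq
    rw [bSeq, ih (by omega), show m - t = m - (t + 1) + 1 by omega,
      show j + m - t - 1 = j + (m - (t + 1)) by omega, onesZeros, sum_range_succ, ← onesZeros]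
    omega

lemma cSeq_add_geomSum {q j s m n : ℕ} (hq : 2 ≤ q) (hs : 1 ≤ s) (hsq : s ≤ q)
    (hn : 1 ≤ n) (hm : n ≤ m) :
    cSeq q j s m n + ∑ i ∈ range j, q ^ i = s * ∑ i ∈ range (j + m - n), q ^ i + n := by
  obtain ⟨d, rfl⟩ : ∃ d, m = n + d := ⟨m - n, by omega⟩
  rw [cSeq, bSeq_eq_onesZeros_add (by omega) (by omega), show n + d - (n - 1) = d + 1 by omega,
    show j + (n + d) - n = j + d by omega]
  have hdigits := geomSum_add_onesZeros q j (d + 1)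
  rw [← add_assoc, sum_range_succ] at hdigits
  have hgeom := sub_one_mul_geomSum_add_one (q := q) (by omega) (j + d)
  have hjK : ∑ i ∈ range j, q ^ i ≤ ∑ i ∈ range (j + d), q ^ i :=
    sum_le_sum_of_subset (range_subset_range.2 (by omega))
  set K := ∑ i ∈ range (j + d), q ^ i
  have hdiv : (q - s) * (q ^ (j + d) - 1) / (q - 1) = (q - s) * K := by
    rw [← hgeom, Nat.add_sub_cancel, mul_left_comm,
      Nat.mul_div_cancel_left _ (by omega : 0 < q - 1)]
  have hsplit : (q - s) * K + s * K = (q - 1) * K + K := by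
    rw [← add_mul, ← add_one_mul (q - 1), Nat.sub_add_cancel hsq, Nat.sub_add_cancel (by omega)]
  have hsK : K ≤ s * K := Nat.le_mul_of_pos_left _ (by omega)
  rw [hdiv]
  omega

/-- for `q ≥ 2`, `j ≥ 2`, `1 < s < q`, `1 ≤ n ≤ q^{j-1}+1`, `m ≥ n`:
`0 < c_{j,m,n} ≤ q^{j+m-n} - 1` and `c_{j,m+1,n} = c_{j,m,n} + s·q^{j+m-n}`. -/
theorem stmt10 (q j s : ℕ) (hq : 2 ≤ q) (hj : 2 ≤ j) (hs1 : 1 < s) (hsq : s < q)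
    (n m : ℕ) (hn1 : 1 ≤ n) (hn2 : n ≤ q ^ (j - 1) + 1) (hm : n ≤ m) :
    0 < cSeq q j s m n ∧ cSeq q j s m n ≤ q ^ (j + m - n) - 1 ∧
      cSeq q j s (m + 1) n = cSeq q j s m n + s * q ^ (j + m - n) := by
  have hc := cSeq_add_geomSum (j := j) hq hs1.le hsq.le hn1 hm
  have hc' := cSeq_add_geomSum (j := j) (m := m + 1) hq hs1.le hsq.le hn1 (by omega)
  rw [show j + (m + 1) - n = j + m - n + 1 by omega, sum_range_succ, mul_add] at hc'
  have hjk : ∑ i ∈ range j, q ^ i ≤ ∑ i ∈ range (j + m - n), q ^ i :=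
    sum_le_sum_of_subset (range_subset_range.2 (by omega))
  have hnj : n ≤ ∑ i ∈ range j, q ^ i := hn2.trans (pow_pred_add_one_le_geomSum hj)
  have hgeom := sub_one_mul_geomSum_add_one (q := q) (by omega) (j + m - n)
  set K := ∑ i ∈ range (j + m - n), q ^ i
  have hsK : K ≤ s * K := Nat.le_mul_of_pos_left _ (by omega)
  have hsK' : s * K ≤ (q - 1) * K := Nat.mul_le_mul_right _ (by omega)
  exact ⟨by omega, by omega, by omega⟩
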